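/- arXiv:1906.01547 — 3 statements merged into one kernel-verified Lean document; each statement's English description precedes it below -/
import Mathlib

section
/- Let K ≥ 1, let a_1 > a_2 > … > a_K > 0 and ã_1 > ã_2 > … > ã_K > 0 with a_1 ≥ ã_1, and let N_0, N_1, Ñ_0, Ñ_1 be the K×K matrices defined by N_0[u,k] = a_k^{u−1}, N_1[u,k] = a_k^{K+u−1}, Ñ_0[u,k] = ã_k^{u−1}, Ñ_1[u,k] = ã_k^{K+u−1} for u,k ∈ {1,…,K}. Suppose that for every vector w̃ ∈ ℝ^K with strictly positive entries there exists a vector w ∈ ℝ^K with strictly positive entries such that N_0 w = Ñ_0 w̃ and N_1 w = Ñ_1 w̃. Then a_k = ã_k for every k, and for each such pair the vectors coincide: w = w̃. -/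
open Matrix Polynomial Finset

noncomputable section

/-- The generalized Vandermonde matrix with entries `N[u,k] = a_k^(s + u - 1)`
(rows indexed by `u = 1,…,K`, i.e. exponents `s, s+1, …, s+K-1`). -/
def vandermondeShift {K : ℕ} (s : ℕ) (a : Fin K → ℝ) : Matrix (Fin K) (Fin K) ℝ :=
  Matrix.of fun u k => a k ^ (s + (u : ℕ))

-- moments lemma
lemma vs_moments {K : ℕ} {a atil w wtil : Fin K → ℝ}
    (h0 : vandermondeShift 0 a *ᵥ w = vandermondeShift 0 atil *ᵥ wtil)
    (h1 : vandermondeShift K a *ᵥ w = vandermondeShift K atil *ᵥ wtil) :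
    ∀ j < 2 * K, ∑ k, w k * a k ^ j = ∑ k, wtil k * atil k ^ j := by
  intro j hj
  rcases lt_or_ge j K with h | h
  · have := congrFun h0 ⟨j, h⟩
    simpa [vandermondeShift, mulVec, dotProduct, mul_comm] using this
  · have hlt : j - K < K := by omega
    have := congrFun h1 ⟨j - K, hlt⟩
    have hKe : K + (j - K) = j := by omega
    simpa [vandermondeShift, mulVec, dotProduct, mul_comm, hKe] using this

lemma sum_swap_poly {K : ℕ} (p : ℝ[X]) (hdeg : p.natDegree < K + 1)
    (y x : Fin K → ℝ) (j : ℕ) :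
    ∑ k, y k * p.eval (x k) * x k ^ j
      = ∑ i ∈ range (K + 1), p.coeff i * ∑ k, y k * x k ^ (i + j) := by
  have step : ∀ k : Fin K, y k * p.eval (x k) * x k ^ j
      = ∑ i ∈ range (K + 1), p.coeff i * (y k * x k ^ (i + j)) := by
    intro k
    rw [eval_eq_sum_range' hdeg, Finset.mul_sum, Finset.sum_mul]
    apply Finset.sum_congr rfl
    intro i _
    rw [pow_add]
    ring
  simp_rw [step, mul_sum]
  exact Finset.sum_comm

lemma nodes_eq {K : ℕ} {a atil w wtil : Fin K → ℝ}
    (ha : StrictAnti a) (hatil : StrictAnti atil)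
    (hw : ∀ k, 0 < w k) (hwtil : ∀ k, 0 < wtil k)
    (h0 : vandermondeShift 0 a *ᵥ w = vandermondeShift 0 atil *ᵥ wtil)
    (h1 : vandermondeShift K a *ᵥ w = vandermondeShift K atil *ᵥ wtil) :
    a = atil := by
  have hmom := vs_moments h0 h1
  set p : ℝ[X] := ∏ i : Fin K, (X - C (a i)) with hp
  have hdeg : p.natDegree < K + 1 := by
    have := Polynomial.natDegree_prod_le (Finset.univ : Finset (Fin K))
      (fun i => X - C (a i))
    simp only [natDegree_X_sub_C] at this
    simp only [Finset.sum_const, card_univ, Fintype.card_fin, smul_eq_mul, mul_one] at this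
    rw [← hp] at this
    omega
  have hroot : ∀ k, p.eval (a k) = 0 := by
    intro k
    rw [hp]
    simp only [eval_prod, eval_sub, eval_X, eval_C]
    exact Finset.prod_eq_zero (Finset.mem_univ k) (by ring)
  -- the vector wtil k * p.eval (atil k) is killed by the vandermonde in atil
  have hkey : (fun k => wtil k * p.eval (atil k)) = 0 := by
    apply Matrix.eq_zero_of_forall_pow_sum_mul_pow_eq_zero hatil.injective
    intro j
    have e1 : ∑ k, wtil k * p.eval (atil k) * atil k ^ (j : ℕ)
        = ∑ i ∈ range (K + 1), p.coeff i * ∑ k, wtil k * atil k ^ (i + (j : ℕ)) :=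
      sum_swap_poly p hdeg wtil atil j
    have e2 : ∑ k, w k * p.eval (a k) * a k ^ (j : ℕ)
        = ∑ i ∈ range (K + 1), p.coeff i * ∑ k, w k * a k ^ (i + (j : ℕ)) :=
      sum_swap_poly p hdeg w a j
    have e3 : ∀ i ∈ range (K + 1), p.coeff i * ∑ k, wtil k * atil k ^ (i + (j : ℕ))
        = p.coeff i * ∑ k, w k * a k ^ (i + (j : ℕ)) := by
      intro i hi
      rw [hmom (i + (j : ℕ)) (by simp at hi; omega)]
    have e4 : ∑ k, w k * p.eval (a k) * a k ^ (j : ℕ) = 0 := by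
      apply Finset.sum_eq_zero; intro k _; rw [hroot k]; ring
    calc ∑ k, wtil k * p.eval (atil k) * atil k ^ (j : ℕ)
        = ∑ i ∈ range (K + 1), p.coeff i * ∑ k, w k * a k ^ (i + (j : ℕ)) := by
          rw [e1]; exact Finset.sum_congr rfl e3
      _ = 0 := by rw [← e2, e4]
  have hroot' : ∀ k, ∃ i, atil k = a i := by
    intro k
    have := congrFun hkey k
    simp only [Pi.zero_apply] at this
    have h2 : p.eval (atil k) = 0 := by
      rcases mul_eq_zero.mp this with h | h
      · exact absurd h (hwtil k).ne'
      · exact h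
    rw [hp] at h2
    simp only [eval_prod, eval_sub, eval_X, eval_C] at h2
    rcases Finset.prod_eq_zero_iff.mp h2 with ⟨i, _, hi⟩
    exact ⟨i, by linarith [sub_eq_zero.mp hi]⟩
  -- image finsets
  set s : Finset ℝ := Finset.image a Finset.univ with hs
  have hcard : s.card = K := by
    rw [hs, Finset.card_image_of_injective _ ha.injective, card_univ, Fintype.card_fin]
  have hrev : StrictAnti (Fin.rev : Fin K → Fin K) := fun i j h => Fin.rev_lt_rev.mpr h
  have hmono1 : StrictMono (a ∘ Fin.rev) := ha.comp hrev
  have hmono2 : StrictMono (atil ∘ Fin.rev) := hatil.comp hrev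
  have hmem1 : ∀ x, (a ∘ Fin.rev) x ∈ s := fun x => Finset.mem_image_of_mem a (mem_univ _)
  have hmem2 : ∀ x, (atil ∘ Fin.rev) x ∈ s := by
    intro x
    rcases hroot' (Fin.rev x) with ⟨i, hi⟩
    simp only [Function.comp_apply, hi]
    exact Finset.mem_image_of_mem a (mem_univ _)
  have e1 := Finset.orderEmbOfFin_unique hcard hmem1 hmono1
  have e2 := Finset.orderEmbOfFin_unique hcard hmem2 hmono2
  funext k
  have := congrFun (e1.trans e2.symm) (Fin.rev k)
  simpa [Fin.rev_rev] using this

/-- for strictly decreasing positive node sequences `a` and `ã` with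
`a_1 ≥ ã_1`, if for every positive vector `w̃` there is a positive vector `w` with
`N_0 w = Ñ_0 w̃` and `N_1 w = Ñ_1 w̃`, then the nodes coincide (`a_k = ã_k` for all `k`)
and any such pair of positive vectors coincides (`w = w̃`). -/
theorem vandermonde_uniqueness (K : ℕ) (hK : 0 < K)
    (a atil : Fin K → ℝ)
    (ha : StrictAnti a) (hatil : StrictAnti atil)
    (ha_pos : ∀ k, 0 < a k) (hatil_pos : ∀ k, 0 < atil k)
    (ha1 : atil ⟨0, hK⟩ ≤ a ⟨0, hK⟩)
    (hexists : ∀ wtil : Fin K → ℝ, (∀ k, 0 < wtil k) →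
      ∃ w : Fin K → ℝ, (∀ k, 0 < w k) ∧
        vandermondeShift 0 a *ᵥ w = vandermondeShift 0 atil *ᵥ wtil ∧
        vandermondeShift K a *ᵥ w = vandermondeShift K atil *ᵥ wtil) :
    (∀ k, a k = atil k) ∧
      ∀ w wtil : Fin K → ℝ, (∀ k, 0 < w k) → (∀ k, 0 < wtil k) →
        vandermondeShift 0 a *ᵥ w = vandermondeShift 0 atil *ᵥ wtil →
        vandermondeShift K a *ᵥ w = vandermondeShift K atil *ᵥ wtil →
        w = wtil := by
  obtain ⟨w, hwpos, h0, h1⟩ := hexists (fun _ => 1) (fun _ => one_pos)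
  have heq : a = atil := nodes_eq ha hatil hwpos (fun _ => one_pos) h0 h1
  refine ⟨fun k => congrFun heq k, ?_⟩
  intro w wtil hw hwtil h0' _
  rw [← heq] at h0'
  have hdet : (vandermondeShift 0 a).det ≠ 0 := by
    have htr : vandermondeShift 0 a = (Matrix.vandermonde a)ᵀ := by
      ext u k
      simp [vandermondeShift, Matrix.vandermonde]
    rw [htr, Matrix.det_transpose]
    exact Matrix.det_vandermonde_ne_zero_iff.mpr ha.injective
  have hu : IsUnit (vandermondeShift 0 a) :=
    (Matrix.isUnit_iff_isUnit_det _).mpr (isUnit_iff_ne_zero.mpr hdet)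
  exact Matrix.mulVec_injective_iff_isUnit.mpr hu h0'
end
end

section
/- Let T and T_W be natural numbers with T_W ≤ T, let γ ≥ 1 and γ̄ ≥ 0 be real numbers, and set γ̃ = max(2, γ). Then ∑_{r=T_W+1}^{T} ∑_{u=0}^{T−r} C(T−T_W, min(u, T−T_W)) γ^r γ̄^u ≤ (γ̃ + γ̄)^T · γ̃ · ( γ̃/(γ̄ + γ̃) )^{T_W}, where C(n,m) denotes the binomial coefficient. -/
open Finset

lemma geo_le_aux {g : ℝ} (hg : 2 ≤ g) (n : ℕ) : ∑ k ∈ Finset.range n, g ^ k ≤ g ^ n := by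
  induction n with
  | zero => simp
  | succ n ih =>
    rw [Finset.sum_range_succ, pow_succ]
    have h0 : (0:ℝ) ≤ g := by linarith
    nlinarith [pow_nonneg h0 n]

lemma tri_swap (M : ℕ) (f : ℕ → ℕ → ℝ) :
    ∑ k ∈ Finset.range M, ∑ u ∈ Finset.range (M - k), f k u
      = ∑ u ∈ Finset.range M, ∑ k ∈ Finset.range (M - u), f k u := by
  rw [Finset.sum_sigma', Finset.sum_sigma']
  apply Finset.sum_nbij' (fun p => ⟨p.2, p.1⟩) (fun p => ⟨p.2, p.1⟩)
  all_goals
    intros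
    first
      | rfl
      | (simp only [Finset.mem_sigma, Finset.mem_range] at *; omega)

/-- the second counting bound in the proof of the likelihood upper bound:
the contribution of state sequences whose number of flipped positions among the `T_W`
sensitive time points exceeds `T_W` is at most `(γ̃+γ̄)^T · γ̃ · (γ̃/(γ̄+γ̃))^T_W`,
where `γ̃ = max 2 γ`. -/
theorem binomial_counting_bound_two (T T_W : ℕ) (hTW : T_W ≤ T)
    (γ γbar : ℝ) (hγ : 1 ≤ γ) (hγbar : 0 ≤ γbar) :
    (∑ r ∈ Finset.Icc (T_W + 1) T, ∑ u ∈ Finset.range (T - r + 1),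
        ((T - T_W).choose (min u (T - T_W)) : ℝ) * γ ^ r * γbar ^ u)
      ≤ (max 2 γ + γbar) ^ T * max 2 γ * (max 2 γ / (γbar + max 2 γ)) ^ T_W := by
  set g := max 2 γ with hgdef
  have hg2 : (2:ℝ) ≤ g := le_max_left _ _
  have hγg : γ ≤ g := le_max_right _ _
  have hg0 : (0:ℝ) ≤ g := by linarith
  have hγ0 : (0:ℝ) ≤ γ := by linarith
  have hs0 : (0:ℝ) < γbar + g := by linarith
  set M := T - T_W with hM
  have hT : T = T_W + M := by omega
  have hRHS : (g + γbar) ^ T * g * (g / (γbar + g)) ^ T_W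
      = g ^ (T_W + 1) * (g + γbar) ^ M := by
    have hne : (γbar + g) ^ T_W ≠ 0 := pow_ne_zero _ (ne_of_gt hs0)
    rw [hT, pow_add, div_pow]
    field_simp
    ring
  rw [hRHS]
  have step1 : (∑ r ∈ Finset.Icc (T_W + 1) T, ∑ u ∈ Finset.range (T - r + 1),
        ((T - T_W).choose (min u (T - T_W)) : ℝ) * γ ^ r * γbar ^ u)
      ≤ ∑ r ∈ Finset.Icc (T_W + 1) T, ∑ u ∈ Finset.range (T - r + 1),
        (M.choose (min u M) : ℝ) * g ^ r * γbar ^ u := by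
    apply Finset.sum_le_sum
    intro r _
    apply Finset.sum_le_sum
    intro u _
    have hpr : γ ^ r ≤ g ^ r := pow_le_pow_left₀ hγ0 hγg r
    have hb : (0:ℝ) ≤ γbar ^ u := pow_nonneg hγbar u
    have hc : (0:ℝ) ≤ (M.choose (min u M) : ℝ) := Nat.cast_nonneg _
    rw [← hM]
    exact mul_le_mul_of_nonneg_right (mul_le_mul_of_nonneg_left hpr hc) hb
  refine le_trans step1 ?_
  have step2 : (∑ r ∈ Finset.Icc (T_W + 1) T, ∑ u ∈ Finset.range (T - r + 1),
        (M.choose (min u M) : ℝ) * g ^ r * γbar ^ u)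
      = g ^ (T_W + 1) * ∑ k ∈ Finset.range M, ∑ u ∈ Finset.range (M - k),
        (M.choose u : ℝ) * g ^ k * γbar ^ u := by
    rw [← Finset.Ico_add_one_right_eq_Icc, Finset.sum_Ico_eq_sum_range]
    have hMr : T + 1 - (T_W + 1) = M := by omega
    rw [hMr, Finset.mul_sum]
    apply Finset.sum_congr rfl
    intro k hk
    rw [Finset.mem_range] at hk
    have h1 : T - (T_W + 1 + k) + 1 = M - k := by omega
    rw [h1, Finset.mul_sum]
    apply Finset.sum_congr rfl
    intro u hu
    rw [Finset.mem_range] at hu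
    have h2 : min u M = u := min_eq_left (by omega)
    rw [h2, pow_add, pow_succ]
    ring
  rw [step2]
  refine mul_le_mul_of_nonneg_left ?_ (by positivity)
  rw [tri_swap M (fun k u => (M.choose u : ℝ) * g ^ k * γbar ^ u)]
  have step3 : ∑ u ∈ Finset.range M, ∑ k ∈ Finset.range (M - u),
        (M.choose u : ℝ) * g ^ k * γbar ^ u
      ≤ ∑ u ∈ Finset.range (M + 1), (M.choose u : ℝ) * g ^ (M - u) * γbar ^ u := by
    refine le_trans ?_ (Finset.sum_le_sum_of_subset_of_nonneg
      (Finset.range_subset_range.2 (Nat.le_succ M)) ?_)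
    · apply Finset.sum_le_sum
      intro u _
      have : ∑ k ∈ Finset.range (M - u), (M.choose u : ℝ) * g ^ k * γbar ^ u
          = ((M.choose u : ℝ) * γbar ^ u) * ∑ k ∈ Finset.range (M - u), g ^ k := by
        rw [Finset.mul_sum]; apply Finset.sum_congr rfl; intro k _; ring
      rw [this]
      have hgeo := geo_le_aux hg2 (M - u)
      have hnn : (0:ℝ) ≤ (M.choose u : ℝ) * γbar ^ u := by positivity
      calc ((M.choose u : ℝ) * γbar ^ u) * ∑ k ∈ Finset.range (M - u), g ^ k
          ≤ ((M.choose u : ℝ) * γbar ^ u) * g ^ (M - u) := by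
            exact mul_le_mul_of_nonneg_left hgeo hnn
        _ = (M.choose u : ℝ) * g ^ (M - u) * γbar ^ u := by ring
    · intro u _ _
      positivity
  refine le_trans step3 ?_
  rw [show g + γbar = γbar + g from add_comm _ _, add_pow]
  apply le_of_eq
  apply Finset.sum_congr rfl
  intro u hu
  rw [Finset.mem_range] at hu
  ring
end

section
/- Let ρ ∈ (0,+∞] and let F be a family of probability densities on (0,∞) such that for any two distinct members φ, φ' of F, either lim_{y→ρ} φ(y)/φ'(y) = 0 or lim_{y→ρ} φ'(y)/φ(y) = 0, with all members strictly positive on a punctured neighborhood of ρ. Let f_1,…,f_M ∈ F be pairwise distinct with lim_{y→ρ} f_{h+1}(y)/f_h(y) = 0 for each h < M, and f̃_1,…,f̃_M ∈ F pairwise distinct with lim_{y→ρ} f̃_{h+1}(y)/f̃_h(y) = 0 for each h < M. Let ε, ε̃ ∈ [0,1)^M and let w, w̃ ∈ ℝ^M have strictly positive entries. If ∑_{h=1}^M w_h [ (1−ε_h) f_h(y) + ε_h 1{y=0} ] = ∑_{h=1}^M w̃_h [ (1−ε̃_h) f̃_h(y) + ε̃_h 1{y=0} ] for every y ∈ [0,∞),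 then f_h = f̃_h and (1−ε_h) w_h = (1−ε̃_h) w̃_h for every h ∈ {1,…,M}. -/
open Filter Topology MeasureTheory

noncomputable section


private lemma chain_dom {L : Filter ℝ} {M : ℕ} {ψ : Fin M → ℝ → ℝ}
    (hpos : ∀ h, ∀ᶠ y in L, 0 < ψ h y)
    (hadj : ∀ h h' : Fin M, (h' : ℕ) = (h : ℕ) + 1 →
      Tendsto (fun y => ψ h' y / ψ h y) L (𝓝 0)) :
    ∀ h h' : Fin M, (h : ℕ) < (h' : ℕ) →
      Tendsto (fun y => ψ h' y / ψ h y) L (𝓝 0) := by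
  have key : ∀ n : ℕ, ∀ h h' : Fin M, (h' : ℕ) = (h : ℕ) + n + 1 →
      Tendsto (fun y => ψ h' y / ψ h y) L (𝓝 0) := by
    intro n
    induction n with
    | zero => intro h h' hd; exact hadj h h' (by omega)
    | succ n ih =>
      intro h h' hd
      have hmlt : (h : ℕ) + n + 1 < M := by omega
      have hm : Fin M := ⟨(h : ℕ) + n + 1, hmlt⟩
      have hmv : ((⟨(h : ℕ) + n + 1, hmlt⟩ : Fin M) : ℕ) = (h : ℕ) + n + 1 := rfl
      have t1 := hadj ⟨(h : ℕ) + n + 1, hmlt⟩ h' (by omega)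
      have t2 := ih h ⟨(h : ℕ) + n + 1, hmlt⟩ (by omega)
      have t3 := t1.mul t2
      rw [mul_zero] at t3
      refine Filter.Tendsto.congr' ?_ t3
      filter_upwards [hpos ⟨(h : ℕ) + n + 1, hmlt⟩] with y hy
      rw [div_mul_div_comm, mul_comm (ψ h' y), mul_div_mul_left _ _ hy.ne']
  intro h h' hlt
  exact key ((h' : ℕ) - (h : ℕ) - 1) h h' (by omega)

private lemma key_ident (L : Filter ℝ) [L.NeBot] (M : ℕ)
    (f ftil : Fin M → ℝ → ℝ)
    (hfpos : ∀ h, ∀ᶠ y in L, 0 < f h y)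
    (hftpos : ∀ h, ∀ᶠ y in L, 0 < ftil h y)
    (hdom : ∀ h : Fin M, f h ≠ ftil h →
      Tendsto (fun y => f h y / ftil h y) L (𝓝 0) ∨
        Tendsto (fun y => ftil h y / f h y) L (𝓝 0))
    (hford : ∀ h h' : Fin M, (h : ℕ) < (h' : ℕ) →
      Tendsto (fun y => f h' y / f h y) L (𝓝 0))
    (hftord : ∀ h h' : Fin M, (h : ℕ) < (h' : ℕ) →
      Tendsto (fun y => ftil h' y / ftil h y) L (𝓝 0))
    (a b : Fin M → ℝ) (ha : ∀ h, 0 < a h) (hb : ∀ h, 0 < b h)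
    (heq : ∀ᶠ y in L, ∑ h, a h * f h y = ∑ h, b h * ftil h y) :
    ∀ h, f h = ftil h ∧ a h = b h := by
  have main : ∀ n k : ℕ, k + n = M →
      (∀ᶠ y in L, ∑ h ∈ Finset.univ.filter (fun h : Fin M => k ≤ (h : ℕ)), a h * f h y
        = ∑ h ∈ Finset.univ.filter (fun h : Fin M => k ≤ (h : ℕ)), b h * ftil h y) →
      ∀ h : Fin M, k ≤ (h : ℕ) → f h = ftil h ∧ a h = b h := by
    intro n
    induction n with
    | zero =>
      intro k hk _ h hh
      exact absurd h.isLt (by omega)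
    | succ n ih =>
      intro k hk hEq
      set S : Finset (Fin M) := Finset.univ.filter (fun h : Fin M => k ≤ (h : ℕ)) with hSdef
      have hkM : k < M := by omega
      set h₀ : Fin M := ⟨k, hkM⟩ with hh₀
      have h₀S : h₀ ∈ S := by simp [hSdef, hh₀]
      -- dividing a finite sum by φ
      have hdivsum : ∀ (c : Fin M → ℝ) (g : Fin M → ℝ → ℝ) (φ : ℝ → ℝ) (l : Fin M → ℝ),
          (∀ h ∈ S, Tendsto (fun y => g h y / φ y) L (𝓝 (l h))) →
          Tendsto (fun y => (∑ h ∈ S, c h * g h y) / φ y) L (𝓝 (∑ h ∈ S, c h * l h)) := by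
        intro c g φ l hl
        have e : (fun y => (∑ h ∈ S, c h * g h y) / φ y)
            = fun y => ∑ h ∈ S, c h * (g h y / φ y) := by
          funext y
          rw [Finset.sum_div]
          exact Finset.sum_congr rfl fun h _ => mul_div_assoc _ _ _
        rw [e]
        exact tendsto_finset_sum _ fun h hh => ((hl h hh).const_mul (c h))
      -- self ratio tends to 1
      have selfratio : ∀ (ψ : Fin M → ℝ → ℝ), (∀ h, ∀ᶠ y in L, 0 < ψ h y) →
          Tendsto (fun y => ψ h₀ y / ψ h₀ y) L (𝓝 1) := by
        intro ψ hpos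
        refine Filter.Tendsto.congr' ?_ tendsto_const_nhds
        filter_upwards [hpos h₀] with y hy
        exact (div_self hy.ne').symm
      -- transfer domination through the leading term
      have transfer : ∀ (ψ : Fin M → ℝ → ℝ), (∀ h, ∀ᶠ y in L, 0 < ψ h y) →
          (∀ h h' : Fin M, (h : ℕ) < (h' : ℕ) →
            Tendsto (fun y => ψ h' y / ψ h y) L (𝓝 0)) →
          ∀ (φ : ℝ → ℝ) (l : ℝ), Tendsto (fun y => ψ h₀ y / φ y) L (𝓝 l) →
          ∀ h ∈ S, h ≠ h₀ → Tendsto (fun y => ψ h y / φ y) L (𝓝 0) := by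
        intro ψ hpos hord φ l h0φ h hhS hne
        have hhk : k ≤ (h : ℕ) := by simpa [hSdef] using hhS
        have hlt : (h₀ : ℕ) < (h : ℕ) := by
          have : (h : ℕ) ≠ k := fun hc => hne (Fin.ext (by simp [hh₀, hc]))
          simp only [hh₀]
          omega
        have t := (hord h₀ h hlt).mul h0φ
        rw [zero_mul] at t
        refine Filter.Tendsto.congr' ?_ t
        filter_upwards [hpos h₀] with y hy
        rw [div_mul_div_comm, mul_comm (ψ h y), mul_div_mul_left _ _ hy.ne']
      -- limit of LHS / f h₀
      have hsum_ite : ∀ c : Fin M → ℝ,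
          (∑ h ∈ S, c h * (if h = h₀ then (1 : ℝ) else 0)) = c h₀ := by
        intro c
        rw [Finset.sum_eq_single_of_mem h₀ h₀S]
        · simp
        · intro h _ hne; simp [hne]
      have hLlim : Tendsto (fun y => (∑ h ∈ S, a h * f h y) / f h₀ y) L (𝓝 (a h₀)) := by
        have := hdivsum a f (f h₀) (fun h => if h = h₀ then 1 else 0) ?_
        · rwa [hsum_ite] at this
        · intro h hh
          by_cases hne : h = h₀
          · subst hne; simpa using selfratio f hfpos
          · simpa [hne] using transfer f hfpos hford (f h₀) 1 (selfratio f hfpos) h hh hne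
      -- first: f h₀ = ftil h₀
      have hfe : f h₀ = ftil h₀ := by
        by_contra hcase
        rcases hdom h₀ hcase with hd | hd
        · -- f h₀ / ftil h₀ → 0 : then LHS/ftil h₀ → 0 but RHS/ftil h₀ → b h₀ > 0
          have hRlim : Tendsto (fun y => (∑ h ∈ S, b h * ftil h y) / ftil h₀ y) L
              (𝓝 (b h₀)) := by
            have := hdivsum b ftil (ftil h₀) (fun h => if h = h₀ then 1 else 0) ?_
            · rwa [hsum_ite] at this
            · intro h hh
              by_cases hne : h = h₀
              · subst hne; simpa using selfratio ftil hftpos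
              · simpa [hne] using
                  transfer ftil hftpos hftord (ftil h₀) 1 (selfratio ftil hftpos) h hh hne
          have hL0 : Tendsto (fun y => (∑ h ∈ S, a h * f h y) / ftil h₀ y) L (𝓝 0) := by
            have := hdivsum a f (ftil h₀) (fun _ => 0) ?_
            · simpa using this
            · intro h hh
              by_cases hne : h = h₀
              · subst hne; exact hd
              · exact transfer f hfpos hford (ftil h₀) 0 hd h hh hne
          have hR0 : Tendsto (fun y => (∑ h ∈ S, b h * ftil h y) / ftil h₀ y) L (𝓝 0) := by
            refine Filter.Tendsto.congr' ?_ hL0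
            filter_upwards [hEq] with y hy
            rw [hy]
          have := tendsto_nhds_unique hRlim hR0
          exact absurd this (hb h₀).ne'
        · -- ftil h₀ / f h₀ → 0 : RHS/f h₀ → 0 but LHS/f h₀ → a h₀ > 0
          have hR0 : Tendsto (fun y => (∑ h ∈ S, b h * ftil h y) / f h₀ y) L (𝓝 0) := by
            have := hdivsum b ftil (f h₀) (fun _ => 0) ?_
            · simpa using this
            · intro h hh
              by_cases hne : h = h₀
              · subst hne; exact hd
              · exact transfer ftil hftpos hftord (f h₀) 0 hd h hh hne
          have hL0 : Tendsto (fun y => (∑ h ∈ S, a h * f h y) / f h₀ y) L (𝓝 0) := by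
            refine Filter.Tendsto.congr' ?_ hR0
            filter_upwards [hEq] with y hy
            rw [hy]
          have := tendsto_nhds_unique hLlim hL0
          exact absurd this (ha h₀).ne'
      -- second: a h₀ = b h₀
      have hab : a h₀ = b h₀ := by
        have hRlim : Tendsto (fun y => (∑ h ∈ S, b h * ftil h y) / f h₀ y) L (𝓝 (b h₀)) := by
          have := hdivsum b ftil (f h₀) (fun h => if h = h₀ then 1 else 0) ?_
          · rwa [hsum_ite] at this
          · intro h hh
            by_cases hne : h = h₀
            · subst hne
              have := selfratio ftil hftpos
              simp only [← hfe] at this ⊢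
              simpa using this
            · have h1 : Tendsto (fun y => ftil h₀ y / f h₀ y) L (𝓝 1) := by
                rw [hfe]; exact selfratio ftil hftpos
              simpa [hne] using transfer ftil hftpos hftord (f h₀) 1 h1 h hh hne
        have hL' : Tendsto (fun y => (∑ h ∈ S, a h * f h y) / f h₀ y) L (𝓝 (b h₀)) := by
          refine Filter.Tendsto.congr' ?_ hRlim
          filter_upwards [hEq] with y hy
          rw [hy]
        exact tendsto_nhds_unique hLlim hL'
      -- set up the next step
      have hnm : h₀ ∉ Finset.univ.filter (fun h : Fin M => k + 1 ≤ (h : ℕ)) := by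
        simp [hh₀]
      have hS' : S = insert h₀ (Finset.univ.filter (fun h : Fin M => k + 1 ≤ (h : ℕ))) := by
        ext h
        simp only [hSdef, Finset.mem_filter, Finset.mem_univ, true_and, Finset.mem_insert,
          Fin.ext_iff, hh₀]
        omega
      have hEq' : ∀ᶠ y in L,
          ∑ h ∈ Finset.univ.filter (fun h : Fin M => k + 1 ≤ (h : ℕ)), a h * f h y
            = ∑ h ∈ Finset.univ.filter (fun h : Fin M => k + 1 ≤ (h : ℕ)), b h * ftil h y := by
        filter_upwards [hEq] with y hy
        rw [hS', Finset.sum_insert hnm, Finset.sum_insert hnm, hfe, hab] at hy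
        linarith
      intro h hh
      by_cases hcase : (h : ℕ) = k
      · have : h = h₀ := Fin.ext (by simp [hh₀, hcase])
        rw [this]
        exact ⟨hfe, hab⟩
      · exact ih (k + 1) (by omega) hEq' h (by omega)
  have huniv : Finset.univ.filter (fun h : Fin M => 0 ≤ (h : ℕ)) = Finset.univ := by
    simp
  intro h
  refine main M 0 (by omega) ?_ h (Nat.zero_le _)
  rw [huniv]
  exact heq



/-- The filter describing `y → ρ` for `ρ ∈ (0, +∞]`: if `ρ = +∞` it is `atTop`,
otherwise it is the punctured-neighborhood filter at the real number `ρ`. -/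
def tendFilter (ρ : ENNReal) : Filter ℝ :=
  if ρ = ⊤ then Filter.atTop else nhdsWithin ρ.toReal {ρ.toReal}ᶜ

/-- Density of a zero-inflated distribution (with respect to Lebesgue measure on `(0,∞)`
plus the Dirac mass at `0`): `g(y) = (1−ε) f(y) + ε·1{y=0}`. -/
def gdens (ε : ℝ) (f : ℝ → ℝ) (y : ℝ) : ℝ :=
  (1 - ε) * f y + if y = 0 then ε else 0

/-- Step 1 of the identifiability proof: equality of two `M`-component
mixtures of zero-inflated distributions, whose densities belong to a family `F` totally
comparable by domination at `ρ` and are ordered by domination, forces the emission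
densities to coincide state by state and the deflated weights `(1−ε_h) w_h` to match. -/
theorem zero_inflated_mixture_identifiable
    (ρ : ENNReal) (hρ : ρ ≠ 0) (M : ℕ) (hM : 1 ≤ M)
    (F : Set (ℝ → ℝ))
    -- members of F are probability densities on (0,∞), positive near ρ
    (hF_dens : ∀ φ ∈ F, (∀ y : ℝ, 0 < y → 0 ≤ φ y) ∧ ∫ y in Set.Ioi (0 : ℝ), φ y = 1)
    (hF_pos : ∀ φ ∈ F, ∀ᶠ y in tendFilter ρ, 0 < φ y)
    -- any two distinct members of F are comparable by domination at ρ
    (hF_dom : ∀ φ ∈ F, ∀ φ' ∈ F, φ ≠ φ' →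
      Tendsto (fun y => φ y / φ' y) (tendFilter ρ) (𝓝 0) ∨
        Tendsto (fun y => φ' y / φ y) (tendFilter ρ) (𝓝 0))
    (f ftil : Fin M → ℝ → ℝ)
    (hfF : ∀ h, f h ∈ F) (hftF : ∀ h, ftil h ∈ F)
    -- pairwise distinct and ordered by domination
    (hf_ne : ∀ h h' : Fin M, h ≠ h' → f h ≠ f h')
    (hft_ne : ∀ h h' : Fin M, h ≠ h' → ftil h ≠ ftil h')
    (hf_ord : ∀ h h' : Fin M, (h' : ℕ) = (h : ℕ) + 1 →
      Tendsto (fun y => f h' y / f h y) (tendFilter ρ) (𝓝 0))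
    (hft_ord : ∀ h h' : Fin M, (h' : ℕ) = (h : ℕ) + 1 →
      Tendsto (fun y => ftil h' y / ftil h y) (tendFilter ρ) (𝓝 0))
    -- zero-inflation parameters and positive weights
    (ε εtil : Fin M → ℝ)
    (hε : ∀ h, 0 ≤ ε h ∧ ε h < 1) (hεtil : ∀ h, 0 ≤ εtil h ∧ εtil h < 1)
    (w wtil : Fin M → ℝ) (hw : ∀ h, 0 < w h) (hwtil : ∀ h, 0 < wtil h)
    -- equality of the two mixtures of zero-inflated distributions on [0,∞)
    (heq : ∀ y : ℝ, 0 ≤ y →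
      ∑ h, w h * gdens (ε h) (f h) y = ∑ h, wtil h * gdens (εtil h) (ftil h) y) :
    ∀ h, f h = ftil h ∧ (1 - ε h) * w h = (1 - εtil h) * wtil h := by
  -- setup
  haveI hNB : (tendFilter ρ).NeBot := by
    rw [tendFilter]
    split_ifs
    · exact atTop_neBot
    · infer_instance
  have hy0 : ∀ᶠ y in tendFilter ρ, 0 < y := by
    rw [tendFilter]
    split_ifs with htop
    · exact eventually_gt_atTop 0
    · have hpos : 0 < ρ.toReal := ENNReal.toReal_pos hρ htop
      exact Filter.Eventually.filter_mono nhdsWithin_le_nhds (eventually_gt_nhds hpos)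
  have hfpos : ∀ h, ∀ᶠ y in tendFilter ρ, 0 < f h y := fun h => hF_pos (f h) (hfF h)
  have hftpos : ∀ h, ∀ᶠ y in tendFilter ρ, 0 < ftil h y := fun h => hF_pos (ftil h) (hftF h)
  have hford := chain_dom hfpos hf_ord
  have hftord := chain_dom hftpos hft_ord
  have hdom : ∀ h : Fin M, f h ≠ ftil h →
      Tendsto (fun y => f h y / ftil h y) (tendFilter ρ) (𝓝 0) ∨
        Tendsto (fun y => ftil h y / f h y) (tendFilter ρ) (𝓝 0) :=
    fun h hne => hF_dom (f h) (hfF h) (ftil h) (hftF h) hne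
  have ha : ∀ h, 0 < (1 - ε h) * w h := fun h => mul_pos (by linarith [(hε h).2]) (hw h)
  have hb : ∀ h, 0 < (1 - εtil h) * wtil h :=
    fun h => mul_pos (by linarith [(hεtil h).2]) (hwtil h)
  have heqL : ∀ᶠ y in tendFilter ρ,
      ∑ h, ((1 - ε h) * w h) * f h y = ∑ h, ((1 - εtil h) * wtil h) * ftil h y := by
    filter_upwards [hy0] with y hy
    have hthis := heq y hy.le
    simp only [gdens, if_neg hy.ne', add_zero] at hthis
    have e1 : ∀ (u v : Fin M → ℝ) (g : Fin M → ℝ → ℝ),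
        ∑ h, (u h * v h) * g h y = ∑ h, v h * (u h * g h y) :=
      fun u v g => Finset.sum_congr rfl fun h _ => by ring
    rw [e1 (fun h => 1 - ε h) w f, e1 (fun h => 1 - εtil h) wtil ftil]
    exact hthis
  exact key_ident (tendFilter ρ) M f ftil hfpos hftpos hdom hford hftord
    (fun h => (1 - ε h) * w h) (fun h => (1 - εtil h) * wtil h) ha hb heqL
end
end
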